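/- Let T > 0 and let ψ : (0,T) × (0,∞) → ℝ be three times continuously differentiable and satisfy the free equation ψ_tt − ψ_rr − (2/r)ψ_r + (2/r²)ψ = 0 on (0,T) × (0,∞). Then the function ψ̂(t,r) := r·ψ_r(t,r) + 2·ψ(t,r) satisfies the one-dimensional wave equation ψ̂_tt − ψ̂_rr = 0 on (0,T) × (0,∞). -/

import Mathlib

/-! Write `L f = f'' + (2/r) f' - (2/r²) f` for the radial operator and `f̂ = r f' + 2 f`.
The hat map intertwines `L` with `∂²_r`: `(L f)^ = (f̂)''`, an identity for functions of one
variable. By the symmetry of mixed partials of a `C³` function the hat also commutes with `∂_t`,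
so `∂²_t ψ̂ = (∂²_t ψ)^ = (L ψ)^ = ∂²_r ψ̂`. -/

open Filter Topology Set

section Slices

variable {F : Type*} [NormedAddCommGroup F] [NormedSpace ℝ F] {f : ℝ × ℝ → F} {s y : ℝ}

theorem hasDerivAt_slice_fst (hf : DifferentiableAt ℝ f (s, y)) :
    HasDerivAt (fun s' => f (s', y)) (fderiv ℝ f (s, y) (1, 0)) s :=
  hf.hasFDerivAt.comp_hasDerivAt s ((hasDerivAt_id s).prodMk (hasDerivAt_const s y))

theorem hasDerivAt_slice_snd (hf : DifferentiableAt ℝ f (s, y)) :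
    HasDerivAt (fun y' => f (s, y')) (fderiv ℝ f (s, y) (0, 1)) y :=
  hf.hasFDerivAt.comp_hasDerivAt y ((hasDerivAt_const y s).prodMk (hasDerivAt_id y))

theorem differentiableAt_fderiv_apply {E : Type*} [NormedAddCommGroup E] [NormedSpace ℝ E]
    {g : E → F} {x : E} (hg : ContDiffAt ℝ 2 g x) (w : E) :
    DifferentiableAt ℝ (fun p => fderiv ℝ g p w) x :=
  ((hg.fderiv_right (m := 1) le_rfl).differentiableAt one_ne_zero).clm_apply
    (differentiableAt_const w)

theorem fderiv_fderiv_apply {E : Type*} [NormedAddCommGroup E] [NormedSpace ℝ E]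
    {g : E → F} {x : E} (hg : ContDiffAt ℝ 2 g x) (v w : E) :
    fderiv ℝ (fun p => fderiv ℝ g p w) x v = fderiv ℝ (fderiv ℝ g) x v w := by
  rw [fderiv_clm_apply ((hg.fderiv_right (m := 1) le_rfl).differentiableAt one_ne_zero)
    (differentiableAt_const w)]
  simp

theorem hasDerivAt_deriv_slice_snd_fst (hf : ContDiffAt ℝ 2 f (s, y)) :
    HasDerivAt (fun s' => deriv (fun y' => f (s', y')) y)
      (fderiv ℝ (fderiv ℝ f) (s, y) (1, 0) (0, 1)) s := by
  have hdiff : ∀ᶠ s' in 𝓝 s, DifferentiableAt ℝ f (s', y) :=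
    (continuous_id.prodMk continuous_const).continuousAt.eventually
      ((hf.eventually (by simp)).mono fun p hp => hp.differentiableAt two_ne_zero)
  rw [← fderiv_fderiv_apply hf]
  exact (hasDerivAt_slice_fst (differentiableAt_fderiv_apply hf _)).congr_of_eventuallyEq
    (hdiff.mono fun s' h => (hasDerivAt_slice_snd h).deriv)

theorem hasDerivAt_deriv_slice_fst_snd (hf : ContDiffAt ℝ 2 f (s, y)) :
    HasDerivAt (fun y' => deriv (fun s' => f (s', y')) s)
      (fderiv ℝ (fderiv ℝ f) (s, y) (0, 1) (1, 0)) y := by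
  have hdiff : ∀ᶠ y' in 𝓝 y, DifferentiableAt ℝ f (s, y') :=
    (continuous_const.prodMk continuous_id).continuousAt.eventually
      ((hf.eventually (by simp)).mono fun p hp => hp.differentiableAt two_ne_zero)
  rw [← fderiv_fderiv_apply hf]
  exact (hasDerivAt_slice_snd (differentiableAt_fderiv_apply hf _)).congr_of_eventuallyEq
    (hdiff.mono fun y' h => (hasDerivAt_slice_fst h).deriv)

theorem deriv_deriv_slice_comm (hf : ContDiffAt ℝ 2 f (s, y)) :
    deriv (fun s' => deriv (fun y' => f (s', y')) y) s
      = deriv (fun y' => deriv (fun s' => f (s', y')) s) y := by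
  rw [(hasDerivAt_deriv_slice_snd_fst hf).deriv, (hasDerivAt_deriv_slice_fst_snd hf).deriv]
  exact hf.isSymmSndFDerivAt (by simp [minSmoothness_of_isRCLikeNormedField]) _ _

theorem ContDiffOn.deriv_slice_fst {U : Set (ℝ × ℝ)} {n : WithTop ℕ∞} (hU : IsOpen U)
    (hf : ContDiffOn ℝ (n + 1) f U) :
    ContDiffOn ℝ n (fun p => deriv (fun s' => f (s', p.2)) p.1) U :=
  ((hf.fderiv_of_isOpen hU le_rfl).clm_apply contDiffOn_const).congr fun p hp =>
    (hasDerivAt_slice_fst ((hf.contDiffAt (hU.mem_nhds hp)).differentiableAt (by simp))).deriv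

end Slices

noncomputable section

def hat (f : ℝ → ℝ) (y : ℝ) : ℝ := y * deriv f y + 2 * f y

def freeRadialOp (f : ℝ → ℝ) (y : ℝ) : ℝ :=
  deriv (deriv f) y + 2 / y * deriv f y - 2 / y ^ 2 * f y

end

theorem Filter.EventuallyEq.hat_eq {f g : ℝ → ℝ} {r : ℝ} (h : f =ᶠ[𝓝 r] g) :
    hat f r = hat g r := by
  simp only [hat, h.deriv_eq, h.eq_of_nhds]

theorem hat_freeRadialOp {f : ℝ → ℝ} {r : ℝ} (hf : ContDiffAt ℝ 3 f r) (hr : r ≠ 0) :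
    hat (freeRadialOp f) r = deriv (deriv (hat f)) r := by
  have hf1 : ContDiffAt ℝ 2 (deriv f) r := hf.derivWithin (by norm_num)
  have hf2 : ContDiffAt ℝ 1 (deriv (deriv f)) r := hf1.derivWithin (by norm_num)
  have hd0 := (hf.differentiableAt (by norm_num)).hasDerivAt
  have hd1 := (hf1.differentiableAt (by norm_num)).hasDerivAt
  have hd2 := (hf2.differentiableAt (by norm_num)).hasDerivAt
  have hL : HasDerivAt (freeRadialOp f)
      (deriv (deriv (deriv f)) r + (2 / r * deriv (deriv f) r - 2 / r ^ 2 * deriv f r)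
        - (2 / r ^ 2 * deriv f r - 4 / r ^ 3 * f r)) r := by
    have hinv : HasDerivAt (fun y : ℝ => 2 / y) (-(2 / r ^ 2)) r :=
      ((hasDerivAt_const r (2 : ℝ)).fun_div (hasDerivAt_id' r) hr).congr_deriv (by ring)
    have hinv2 : HasDerivAt (fun y : ℝ => 2 / y ^ 2) (-(4 / r ^ 3)) r :=
      ((hasDerivAt_const r (2 : ℝ)).fun_div (hasDerivAt_pow 2 r) (pow_ne_zero 2 hr)).congr_deriv
        (by field_simp; ring)
    exact ((hd2.add (hinv.mul hd1)).sub (hinv2.mul hd0)).congr_deriv (by ring)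
  have hhat : deriv (hat f) =ᶠ[𝓝 r] fun y => 3 * deriv f y + y * deriv (deriv f) y := by
    filter_upwards [hf.eventually (by simp)] with y hy
    have hy1 : ContDiffAt ℝ 2 (deriv f) y := hy.derivWithin (by norm_num)
    have h : HasDerivAt (hat f) (1 * deriv f y + y * deriv (deriv f) y + 2 * deriv f y) y :=
      ((hasDerivAt_id' y).mul (hy1.differentiableAt (by norm_num)).hasDerivAt).add
        ((hy.differentiableAt (by norm_num)).hasDerivAt.const_mul 2)
    rw [h.deriv]
    ring
  have hR : HasDerivAt (fun y => 3 * deriv f y + y * deriv (deriv f) y)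
      (3 * deriv (deriv f) r + (1 * deriv (deriv f) r + r * deriv (deriv (deriv f)) r)) r :=
    (hd1.const_mul 3).add ((hasDerivAt_id' r).mul hd2)
  rw [hhat.deriv_eq, hR.deriv, hat, hL.deriv, freeRadialOp]
  field_simp
  ring

theorem deriv_hat_slice_comm {φ : ℝ → ℝ → ℝ} {s r : ℝ}
    (hφ : ContDiffAt ℝ 2 (fun p : ℝ × ℝ => φ p.1 p.2) (s, r)) :
    deriv (fun s' => hat (φ s') r) s = hat (fun y => deriv (fun s' => φ s' y) s) r := by
  have h1 := hasDerivAt_slice_fst (hφ.differentiableAt two_ne_zero)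
  have h2 := hasDerivAt_deriv_slice_snd_fst hφ
  have h : HasDerivAt (fun s' => hat (φ s') r)
      (r * fderiv ℝ (fderiv ℝ fun p : ℝ × ℝ => φ p.1 p.2) (s, r) (1, 0) (0, 1)
        + 2 * fderiv ℝ (fun p : ℝ × ℝ => φ p.1 p.2) (s, r) (1, 0)) s :=
    (h2.const_mul r).add (h1.const_mul 2)
  rw [h.deriv, hat, ← h2.deriv, deriv_deriv_slice_comm hφ, h1.deriv]

theorem stmt_1 (T : ℝ) (ψ : ℝ → ℝ → ℝ)
    (hreg : ContDiffOn ℝ 3 (fun p : ℝ × ℝ => ψ p.1 p.2) (Set.Ioo 0 T ×ˢ Set.Ioi 0))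
    (hpde : ∀ t ∈ Set.Ioo (0:ℝ) T, ∀ r ∈ Set.Ioi (0:ℝ),
      deriv (fun s => deriv (fun s' => ψ s' r) s) t
      - deriv (fun y => deriv (fun y' => ψ t y') y) r
      - (2 / r) * deriv (fun y => ψ t y) r
      + (2 / r ^ 2) * ψ t r = 0) :
    ∀ t ∈ Set.Ioo (0:ℝ) T, ∀ r ∈ Set.Ioi (0:ℝ),
      deriv (fun s => deriv
        (fun s' => r * deriv (fun y => ψ s' y) r + 2 * ψ s' r) s) t
      - deriv (fun y => deriv
        (fun y' => y' * deriv (fun z => ψ t z) y' + 2 * ψ t y') y) r = 0 := by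
  intro t ht r hr
  have hU : IsOpen (Ioo 0 T ×ˢ Ioi (0 : ℝ)) := isOpen_Ioo.prod isOpen_Ioi
  have hψ : ∀ s ∈ Ioo 0 T, ContDiffAt ℝ 2 (fun p : ℝ × ℝ => ψ p.1 p.2) (s, r) := fun s hs =>
    (hreg.contDiffAt (hU.mem_nhds ⟨hs, hr⟩)).of_le (by norm_num)
  have hψt : ContDiffAt ℝ 2 (fun p : ℝ × ℝ => deriv (fun s' => ψ s' p.2) p.1) (t, r) :=
    (hreg.deriv_slice_fst (f := fun p => ψ p.1 p.2) (n := 2) hU).contDiffAt (hU.mem_nhds ⟨ht, hr⟩)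
  have hψr : ContDiffAt ℝ 3 (ψ t) r :=
    (hreg.contDiffAt (hU.mem_nhds ⟨ht, hr⟩)).comp r (contDiffAt_const.prodMk contDiffAt_id)
  have hfree : (fun y => deriv (fun s => deriv (fun s' => ψ s' y) s) t) =ᶠ[𝓝 r]
      freeRadialOp (ψ t) := by
    filter_upwards [Ioi_mem_nhds hr] with y hy
    rw [freeRadialOp]
    linarith [hpde t ht y hy]
  have hcomm : (fun s => deriv (fun s' => hat (ψ s') r) s) =ᶠ[𝓝 t]
      fun s => hat (fun y => deriv (fun s' => ψ s' y) s) r :=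
    eventually_of_mem (Ioo_mem_nhds ht.1 ht.2) fun s hs => deriv_hat_slice_comm (hψ s hs)
  rw [sub_eq_zero]
  calc deriv (fun s => deriv (fun s' => hat (ψ s') r) s) t
      = deriv (fun s => hat (fun y => deriv (fun s' => ψ s' y) s) r) t := hcomm.deriv_eq
    _ = hat (fun y => deriv (fun s => deriv (fun s' => ψ s' y) s) t) r :=
        deriv_hat_slice_comm hψt
    _ = hat (freeRadialOp (ψ t)) r := hfree.hat_eq
    _ = deriv (deriv (hat (ψ t))) r := hat_freeRadialOp hψr hr.ne'
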